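/- Constant learning rate progress: with learning rate η = Δ² / (40·K^{3/2}·R_max³), for every θ ∈ ℝ^K the one-step expected improvement of the stochastic gradient update satisfies π_θ^⊤r − Σ_{a₀=1}^K π_θ(a₀) · ∫ (π_{θ + η·g(θ, a₀, x)})^⊤ r dP_{a₀}(x) ≤ −(Δ² / (80·K^{3/2}·R_max³)) · ‖∇(θ)‖₂². -/

import Mathlib

open MeasureTheory Finset Real

/-- Softmax policy. -/
noncomputable def softmax {K : ℕ} (θ : Fin K → ℝ) (a : Fin K) : ℝ :=
  Real.exp (θ a) / ∑ a' : Fin K, Real.exp (θ a')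

/-- Expected reward `π_θ^⊤ r`. -/
noncomputable def value {K : ℕ} (r θ : Fin K → ℝ) : ℝ :=
  ∑ a : Fin K, softmax θ a * r a

/-- True gradient of `θ ↦ π_θ^⊤ r`. -/
noncomputable def pgrad {K : ℕ} (r θ : Fin K → ℝ) (a : Fin K) : ℝ :=
  softmax θ a * (r a - value r θ)

/-- Stochastic gradient. -/
noncomputable def sgrad {K : ℕ} (θ : Fin K → ℝ) (a₀ : Fin K) (x : ℝ) (a : Fin K) : ℝ :=
  ((if a = a₀ then (1 : ℝ) else 0) - softmax θ a) * x

/-- Euclidean norm on `ℝ^K`. -/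
noncomputable def norm2 {K : ℕ} (v : Fin K → ℝ) : ℝ :=
  Real.sqrt (∑ a : Fin K, (v a) ^ 2)

/-!
Write `p = π_θ` and `N = ‖∇(θ)‖₂`. Since `π_{θ+u}(a) ∝ p_a e^{u_a}`, one has the exact identity
`π_{θ+u}^⊤r − π_θ^⊤r = (Σ_a ∇(θ)(a) (e^{u_a} − 1)) / Σ_b p_b e^{u_b}`. For `|u| ≤ δ ≤ 1` this is
`⟨∇(θ), u⟩` up to an error weighted by `|∇(θ)(a)| ≤ N` instead of by a global smoothness
constant. Along the stochastic step `u = η x (e_{a₀} − π_θ)` the error is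
`O(η² R_max² N (1 − p_{a₀}))`, and averaging over `a₀ ∼ π_θ`, `x ∼ P_{a₀}` the first-order term
becomes `η N²` because `r(a₀)(e_{a₀} − π_θ)` is an unbiased estimate of `∇(θ)`. The total error is
then `O(η² R_max² N Σ_a p_a (1 − p_a))`, and the reward gap gives
`Δ Σ_a p_a (1 − p_a) ≤ 4 √K N`: all arms but one are `Δ/2`-far from `π_θ^⊤r`, so their total
mass is at most `(2/Δ) ‖∇(θ)‖₁`. With the chosen `η` the error is at most half the gain.
-/

section Softmax

variable {K : ℕ}

lemma softmax_pos (θ : Fin K → ℝ) (a : Fin K) : 0 < softmax θ a :=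
  div_pos (exp_pos _) (sum_pos (fun _ _ => exp_pos _) ⟨a, mem_univ a⟩)

lemma softmax_le_one (θ : Fin K → ℝ) (a : Fin K) : softmax θ a ≤ 1 :=
  div_le_one_of_le₀ (single_le_sum (fun b _ => (exp_pos (θ b)).le) (mem_univ a))
    (sum_nonneg fun _ _ => (exp_pos _).le)

lemma sum_softmax [NeZero K] (θ : Fin K → ℝ) : ∑ a, softmax θ a = 1 := by
  simp only [softmax, ← sum_div]
  exact div_self (sum_pos (fun _ _ => exp_pos _) univ_nonempty).ne'

lemma sum_erase_softmax [NeZero K] (θ : Fin K → ℝ) (a₀ : Fin K) :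
    ∑ a ∈ univ.erase a₀, softmax θ a = 1 - softmax θ a₀ := by
  rw [sum_erase_eq_sub (mem_univ a₀), sum_softmax]

lemma continuous_softmax (a : Fin K) : Continuous fun θ : Fin K → ℝ => softmax θ a :=
  Continuous.div (by fun_prop) (by fun_prop) fun θ =>
    (sum_pos (fun b _ => exp_pos (θ b)) ⟨a, mem_univ a⟩).ne'

lemma continuous_value (r : Fin K → ℝ) : Continuous (value r) :=
  continuous_finsetSum _ fun a _ => (continuous_softmax a).mul continuous_const

lemma abs_value_le [NeZero K] {R : ℝ} {r : Fin K → ℝ} (hr : ∀ a, |r a| ≤ R) (θ : Fin K → ℝ) :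
    |value r θ| ≤ R :=
  calc |value r θ| ≤ ∑ a, |softmax θ a * r a| := abs_sum_le_sum_abs _ _
    _ ≤ ∑ a, softmax θ a * R := sum_le_sum fun a _ => by
        rw [abs_mul, abs_of_pos (softmax_pos θ a)]
        exact mul_le_mul_of_nonneg_left (hr a) (softmax_pos θ a).le
    _ = R := by rw [← sum_mul, sum_softmax, one_mul]

lemma sum_pgrad [NeZero K] (r θ : Fin K → ℝ) : ∑ a, pgrad r θ a = 0 := by
  simp only [pgrad, mul_sub, sum_sub_distrib, ← sum_mul, sum_softmax, one_mul]
  exact sub_eq_zero.2 rfl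

lemma softmax_add (θ u : Fin K → ℝ) (a : Fin K) :
    softmax (fun b => θ b + u b) a
      = softmax θ a * exp (u a) / ∑ b, softmax θ b * exp (u b) := by
  have hpos : ∀ φ : Fin K → ℝ, 0 < ∑ b, exp (φ b) := fun φ =>
    sum_pos (fun b _ => exp_pos (φ b)) ⟨a, mem_univ a⟩
  simp only [softmax, exp_add, div_mul_eq_mul_div, ← sum_div]
  field_simp [(hpos θ).ne', (hpos fun b => θ b + u b).ne']

lemma value_add (r θ u : Fin K → ℝ) :
    value r (fun b => θ b + u b)
      = (∑ a, softmax θ a * exp (u a) * r a) / ∑ b, softmax θ b * exp (u b) := by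
  simp only [value, sum_div, softmax_add, div_mul_eq_mul_div]

lemma value_add_sub [NeZero K] (r θ u : Fin K → ℝ) :
    value r (fun b => θ b + u b) - value r θ
      = (∑ a, pgrad r θ a * (exp (u a) - 1)) / ∑ b, softmax θ b * exp (u b) := by
  have hZ : 0 < ∑ b, softmax θ b * exp (u b) :=
    sum_pos (fun b _ => mul_pos (softmax_pos θ b) (exp_pos _)) univ_nonempty
  have hnum : ∑ a, pgrad r θ a * (exp (u a) - 1)
      = ∑ a, softmax θ a * exp (u a) * r a - value r θ * ∑ b, softmax θ b * exp (u b) := by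
    simp only [mul_sub, mul_one, sum_sub_distrib, sum_pgrad, sub_zero, mul_sum]
    rw [← sum_sub_distrib]
    exact sum_congr rfl fun a _ => by rw [pgrad]; ring
  rw [value_add, hnum]
  field_simp

end Softmax

lemma abs_exp_sub_one_le_one_add_mul {t δ : ℝ} (ht : |t| ≤ δ) (hδ : δ ≤ 1) :
    |exp t - 1| ≤ (1 + δ) * |t| := by
  have hsq : t ^ 2 ≤ δ * |t| := by
    rw [← sq_abs, sq]
    exact mul_le_mul_of_nonneg_right ht (abs_nonneg t)
  calc |exp t - 1| = |(exp t - 1 - t) + t| := by ring_nf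
    _ ≤ |exp t - 1 - t| + |t| := abs_add_le _ _
    _ ≤ (1 + δ) * |t| := by linarith [abs_exp_sub_one_sub_id_le (ht.trans hδ)]

noncomputable def perturbationError {K : ℕ} (r θ u : Fin K → ℝ) (δ : ℝ) : ℝ :=
  exp δ * (∑ a, |pgrad r θ a| * u a ^ 2
    + |∑ a, pgrad r θ a * u a| * ((1 + δ) * ∑ a, softmax θ a * |u a|))

lemma value_add_ge {K : ℕ} [NeZero K] (r θ u : Fin K → ℝ) {δ : ℝ} (hδ : δ ≤ 1)
    (hu : ∀ a, |u a| ≤ δ) :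
    value r θ + ∑ a, pgrad r θ a * u a - perturbationError r θ u δ
      ≤ value r (fun a => θ a + u a) := by
  set Z := ∑ b, softmax θ b * exp (u b)
  set L := ∑ a, pgrad r θ a * u a
  set E := ∑ a, pgrad r θ a * (exp (u a) - 1 - u a)
  have hZ : exp (-δ) ≤ Z :=
    calc exp (-δ) = ∑ b, softmax θ b * exp (-δ) := by rw [← sum_mul, sum_softmax, one_mul]
      _ ≤ Z := sum_le_sum fun b _ => mul_le_mul_of_nonneg_left
          (exp_le_exp.2 (neg_le_of_abs_le (hu b))) (softmax_pos θ b).le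
  have hZpos : 0 < Z := (exp_pos _).trans_le hZ
  have hZinv : Z⁻¹ ≤ exp δ := by
    simpa only [exp_neg, inv_inv] using inv_anti₀ (exp_pos _) hZ
  have hE : |E| ≤ ∑ a, |pgrad r θ a| * u a ^ 2 :=
    (abs_sum_le_sum_abs _ _).trans <| sum_le_sum fun a _ => by
      rw [abs_mul]
      exact mul_le_mul_of_nonneg_left (abs_exp_sub_one_sub_id_le ((hu a).trans hδ))
        (abs_nonneg _)
  have h1Z : |1 - Z| ≤ (1 + δ) * ∑ a, softmax θ a * |u a| := by
    have h : 1 - Z = ∑ a, softmax θ a * (1 - exp (u a)) := by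
      simp only [Z, mul_sub, mul_one, sum_sub_distrib, sum_softmax]
    rw [h, mul_sum]
    refine (abs_sum_le_sum_abs _ _).trans (sum_le_sum fun a _ => ?_)
    rw [abs_mul, abs_of_pos (softmax_pos θ a), abs_sub_comm, mul_left_comm]
    exact mul_le_mul_of_nonneg_left (abs_exp_sub_one_le_one_add_mul (hu a) hδ)
      (softmax_pos θ a).le
  have hdiff : value r (fun a => θ a + u a) - value r θ - L = Z⁻¹ * (E + L * (1 - Z)) := by
    have h : ∑ a, pgrad r θ a * (exp (u a) - 1) = E + L := by
      simp only [E, L, ← sum_add_distrib]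
      exact sum_congr rfl fun a _ => by ring
    rw [value_add_sub, h]
    change (E + L) / Z - L = _
    field_simp
    ring
  have hbound : |Z⁻¹ * (E + L * (1 - Z))| ≤ perturbationError r θ u δ := by
    rw [perturbationError, abs_mul, abs_of_pos (inv_pos.2 hZpos)]
    refine mul_le_mul hZinv ((abs_add_le _ _).trans ?_) (abs_nonneg _) (exp_pos _).le
    rw [abs_mul]
    gcongr
  linarith [(abs_le.1 (hdiff ▸ hbound)).1]

section Norm

variable {K : ℕ}

lemma norm2_nonneg (v : Fin K → ℝ) : 0 ≤ norm2 v := sqrt_nonneg _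

lemma norm2_sq (v : Fin K → ℝ) : norm2 v ^ 2 = ∑ a, v a ^ 2 :=
  sq_sqrt (sum_nonneg fun _ _ => sq_nonneg _)

lemma abs_le_norm2 (v : Fin K → ℝ) (a : Fin K) : |v a| ≤ norm2 v := by
  rw [← sqrt_sq_eq_abs]
  exact sqrt_le_sqrt (single_le_sum (fun b _ => sq_nonneg (v b)) (mem_univ a))

lemma sum_abs_le_sqrt_card_mul_norm2 (v : Fin K → ℝ) : ∑ a, |v a| ≤ √K * norm2 v := by
  have h := sqrt_le_sqrt (sq_sum_le_card_mul_sum_sq (s := univ) (f := fun a => |v a|))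
  simp only [sq_abs] at h
  rwa [sqrt_sq (sum_nonneg fun _ _ => abs_nonneg _), sqrt_mul (Nat.cast_nonneg _), card_univ,
    Fintype.card_fin, ← norm2.eq_1] at h

end Norm

section Score

variable {K : ℕ}

/-- The score function `∇_θ log π_θ(a₀) = e_{a₀} − π_θ`, so that `g(θ, a₀, x) = x · score θ a₀`. -/
noncomputable def score (θ : Fin K → ℝ) (a₀ a : Fin K) : ℝ :=
  (if a = a₀ then 1 else 0) - softmax θ a

lemma sgrad_eq_score_mul (θ : Fin K → ℝ) (a₀ : Fin K) (x : ℝ) (a : Fin K) :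
    sgrad θ a₀ x a = score θ a₀ a * x := rfl

lemma score_self (θ : Fin K → ℝ) (a₀ : Fin K) : score θ a₀ a₀ = 1 - softmax θ a₀ := by
  simp [score]

lemma score_of_ne (θ : Fin K → ℝ) {a₀ a : Fin K} (h : a ≠ a₀) :
    score θ a₀ a = -softmax θ a := by
  simp [score, h]

lemma abs_score_le_one (θ : Fin K → ℝ) (a₀ a : Fin K) : |score θ a₀ a| ≤ 1 := by
  have := softmax_pos θ a
  have := softmax_le_one θ a
  unfold score
  split_ifs <;> rw [abs_le] <;> constructor <;> linarith

lemma sum_erase_sq_softmax_le [NeZero K] (θ : Fin K → ℝ) (a₀ : Fin K) :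
    ∑ a ∈ univ.erase a₀, softmax θ a ^ 2 ≤ (1 - softmax θ a₀) ^ 2 :=
  sum_erase_softmax θ a₀ ▸ sum_sq_le_sq_sum_of_nonneg fun a _ => (softmax_pos θ a).le

lemma sum_score_sq_le [NeZero K] (θ : Fin K → ℝ) (a₀ : Fin K) :
    ∑ a, score θ a₀ a ^ 2 ≤ 2 * (1 - softmax θ a₀) := by
  rw [← add_sum_erase _ _ (mem_univ a₀), score_self,
    sum_congr rfl fun a ha => by rw [score_of_ne θ (ne_of_mem_erase ha), neg_sq]]
  nlinarith [sum_erase_sq_softmax_le θ a₀, softmax_pos θ a₀, softmax_le_one θ a₀]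

lemma sum_softmax_mul_abs_score_le [NeZero K] (θ : Fin K → ℝ) (a₀ : Fin K) :
    ∑ a, softmax θ a * |score θ a₀ a| ≤ 1 - softmax θ a₀ := by
  rw [← add_sum_erase _ _ (mem_univ a₀), score_self,
    abs_of_nonneg (sub_nonneg.2 (softmax_le_one θ a₀)), sum_congr rfl fun a ha => by
      rw [score_of_ne θ (ne_of_mem_erase ha), abs_neg, abs_of_pos (softmax_pos θ a), ← sq]]
  nlinarith [sum_erase_sq_softmax_le θ a₀]

lemma abs_sum_mul_score_le [NeZero K] (v θ : Fin K → ℝ) (a₀ : Fin K) :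
    |∑ a, v a * score θ a₀ a| ≤ 2 * norm2 v := by
  have hmean : |∑ a, v a * softmax θ a| ≤ norm2 v :=
    calc |∑ a, v a * softmax θ a| ≤ ∑ a, norm2 v * softmax θ a :=
          (abs_sum_le_sum_abs _ _).trans <| sum_le_sum fun a _ => by
            rw [abs_mul, abs_of_pos (softmax_pos θ a)]
            exact mul_le_mul_of_nonneg_right (abs_le_norm2 v a) (softmax_pos θ a).le
      _ = norm2 v := by rw [← mul_sum, sum_softmax, mul_one]
  have h : ∑ a, v a * score θ a₀ a = v a₀ - ∑ a, v a * softmax θ a := by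
    simp [score, mul_sub, sum_sub_distrib]
  rw [h]
  linarith [abs_sub (v a₀) (∑ a, v a * softmax θ a), abs_le_norm2 v a₀]

lemma sum_softmax_mul_score [NeZero K] (r θ : Fin K → ℝ) (a : Fin K) :
    ∑ a₀, softmax θ a₀ * r a₀ * score θ a₀ a = pgrad r θ a := by
  simp only [score, mul_sub, mul_ite, mul_one, mul_zero, sum_sub_distrib, sum_ite_eq, mem_univ,
    ↓reduceIte, ← sum_mul, pgrad, value, sub_right_inj]
  ring

lemma sum_softmax_mul_inner_score [NeZero K] (r θ : Fin K → ℝ) :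
    ∑ a₀, softmax θ a₀ * r a₀ * ∑ a, pgrad r θ a * score θ a₀ a = norm2 (pgrad r θ) ^ 2 := by
  simp_rw [norm2_sq, mul_sum]
  rw [sum_comm]
  refine sum_congr rfl fun a _ => ?_
  calc ∑ a₀, softmax θ a₀ * r a₀ * (pgrad r θ a * score θ a₀ a)
      = pgrad r θ a * ∑ a₀, softmax θ a₀ * r a₀ * score θ a₀ a := by
        rw [mul_sum]
        exact sum_congr rfl fun _ _ => by ring
    _ = pgrad r θ a ^ 2 := by rw [sum_softmax_mul_score, sq]

end Score

lemma exp_mul_four_add_two_mul_le {δ : ℝ} (hδ0 : 0 ≤ δ) (hδ : δ ≤ 1 / 20) :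
    exp δ * (4 + 2 * δ) ≤ 5 := by
  have := (abs_le.1 (abs_exp_sub_one_le (x := δ) (by rw [abs_of_nonneg hδ0]; linarith))).2
  rw [abs_of_nonneg hδ0] at this
  nlinarith

lemma perturbationError_score_le {K : ℕ} [NeZero K] (r θ : Fin K → ℝ) {c δ : ℝ} (hc : |c| ≤ δ)
    (hδ : δ ≤ 1 / 20) (a₀ : Fin K) :
    perturbationError r θ (fun a => c * score θ a₀ a) δ
      ≤ 5 * δ ^ 2 * norm2 (pgrad r θ) * (1 - softmax θ a₀) := by
  set N := norm2 (pgrad r θ)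
  set q := 1 - softmax θ a₀
  have hN : 0 ≤ N := norm2_nonneg _
  have hq : 0 ≤ q := sub_nonneg.2 (softmax_le_one θ a₀)
  have hδ0 : 0 ≤ δ := (abs_nonneg c).trans hc
  have hA : ∑ a, |pgrad r θ a| * (c * score θ a₀ a) ^ 2 ≤ δ ^ 2 * (N * (2 * q)) :=
    calc ∑ a, |pgrad r θ a| * (c * score θ a₀ a) ^ 2
        = c ^ 2 * ∑ a, |pgrad r θ a| * score θ a₀ a ^ 2 := by
          rw [mul_sum]; exact sum_congr rfl fun a _ => by ring
      _ ≤ δ ^ 2 * ∑ a, N * score θ a₀ a ^ 2 :=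
          mul_le_mul (sq_le_sq' (abs_le.1 hc).1 (abs_le.1 hc).2)
            (sum_le_sum fun a _ => mul_le_mul_of_nonneg_right (abs_le_norm2 _ a) (sq_nonneg _))
            (sum_nonneg fun a _ => mul_nonneg (abs_nonneg _) (sq_nonneg _)) (sq_nonneg δ)
      _ ≤ δ ^ 2 * (N * (2 * q)) := by
          rw [← mul_sum]; gcongr; exact sum_score_sq_le θ a₀
  have hL : |∑ a, pgrad r θ a * (c * score θ a₀ a)| ≤ δ * (2 * N) := by
    simp_rw [mul_left_comm _ c, ← mul_sum, abs_mul]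
    exact mul_le_mul hc (abs_sum_mul_score_le _ θ a₀) (abs_nonneg _) hδ0
  have hB : ∑ a, softmax θ a * |c * score θ a₀ a| ≤ δ * q := by
    simp_rw [abs_mul, mul_left_comm _ |c|, ← mul_sum]
    exact mul_le_mul hc (sum_softmax_mul_abs_score_le θ a₀)
      (sum_nonneg fun a _ => mul_nonneg (softmax_pos θ a).le (abs_nonneg _)) hδ0
  calc perturbationError r θ (fun a => c * score θ a₀ a) δ
      ≤ exp δ * (δ ^ 2 * (N * (2 * q)) + δ * (2 * N) * ((1 + δ) * (δ * q))) := by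
        rw [perturbationError]
        gcongr
        exact mul_nonneg (by linarith)
          (sum_nonneg fun a _ => mul_nonneg (softmax_pos θ a).le (abs_nonneg _))
    _ = exp δ * (4 + 2 * δ) * (δ ^ 2 * N * q) := by ring
    _ ≤ 5 * (δ ^ 2 * N * q) :=
        mul_le_mul_of_nonneg_right (exp_mul_four_add_two_mul_le hδ0 hδ) (by positivity)
    _ = 5 * δ ^ 2 * N * q := by ring

lemma value_add_sgrad_ge {K : ℕ} [NeZero K] (r θ : Fin K → ℝ) {R η x : ℝ} (hη : 0 ≤ η)
    (hηR : η * R ≤ 1 / 20) (hx : |x| ≤ R) (a₀ : Fin K) :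
    value r θ + η * x * ∑ a, pgrad r θ a * score θ a₀ a
        - 5 * η ^ 2 * R ^ 2 * norm2 (pgrad r θ) * (1 - softmax θ a₀)
      ≤ value r (fun a => θ a + η * sgrad θ a₀ x a) := by
  have hc : |η * x| ≤ η * R := by
    rw [abs_mul, abs_of_nonneg hη]
    exact mul_le_mul_of_nonneg_left hx hη
  have hu : ∀ a, η * sgrad θ a₀ x a = η * x * score θ a₀ a := fun a => by
    rw [sgrad_eq_score_mul]; ring
  have h := value_add_ge r θ (fun a => η * x * score θ a₀ a) (δ := η * R) (by linarith) fun a => by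
    rw [abs_mul]
    simpa using mul_le_mul hc (abs_score_le_one θ a₀ a) (abs_nonneg _) (abs_nonneg _ |>.trans hc)
  have herr := perturbationError_score_le r θ hc hηR a₀
  simp only [hu]
  rw [mul_pow] at herr
  simp only [mul_left_comm _ (η * x), ← mul_sum] at h
  linarith

section Gap

variable {K : ℕ}

lemma sum_softmax_mul_one_sub_le [NeZero K] (θ : Fin K → ℝ) (a₀ : Fin K) :
    ∑ a, softmax θ a * (1 - softmax θ a) ≤ 2 * (1 - softmax θ a₀) := by
  rw [← add_sum_erase _ _ (mem_univ a₀)]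
  have hrest : ∑ a ∈ univ.erase a₀, softmax θ a * (1 - softmax θ a)
      ≤ ∑ a ∈ univ.erase a₀, softmax θ a :=
    sum_le_sum fun a _ => mul_le_of_le_one_right (softmax_pos θ a).le
      (sub_le_self _ (softmax_pos θ a).le)
  rw [sum_erase_softmax] at hrest
  nlinarith [softmax_pos θ a₀, softmax_le_one θ a₀]

lemma exists_forall_ne_half_le_abs_sub [NeZero K] {r : Fin K → ℝ} {Δ : ℝ}
    (hΔ : ∀ i j, i ≠ j → Δ ≤ |r i - r j|) (c : ℝ) :
    ∃ a₀, ∀ a, a ≠ a₀ → Δ / 2 ≤ |r a - c| := by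
  by_cases h : ∃ a₀, |r a₀ - c| < Δ / 2
  · obtain ⟨a₀, ha₀⟩ := h
    refine ⟨a₀, fun a ha => ?_⟩
    have := abs_sub_le (r a) c (r a₀)
    linarith [hΔ a a₀ ha, abs_sub_comm c (r a₀)]
  · simp only [not_exists, not_lt] at h
    exact ⟨0, fun a _ => h a⟩

lemma mul_sum_softmax_mul_one_sub_le [NeZero K] {r : Fin K → ℝ} {Δ : ℝ} (hΔ0 : 0 ≤ Δ)
    (hΔ : ∀ i j, i ≠ j → Δ ≤ |r i - r j|) (θ : Fin K → ℝ) :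
    Δ * ∑ a, softmax θ a * (1 - softmax θ a) ≤ 4 * √K * norm2 (pgrad r θ) := by
  obtain ⟨a₀, ha₀⟩ := exists_forall_ne_half_le_abs_sub hΔ (value r θ)
  have hfar : Δ / 2 * (1 - softmax θ a₀) ≤ √K * norm2 (pgrad r θ) :=
    calc Δ / 2 * (1 - softmax θ a₀) = ∑ a ∈ univ.erase a₀, softmax θ a * (Δ / 2) := by
          rw [← sum_mul, sum_erase_softmax, mul_comm]
      _ ≤ ∑ a ∈ univ.erase a₀, |pgrad r θ a| := sum_le_sum fun a ha => by
          rw [pgrad, abs_mul, abs_of_pos (softmax_pos θ a)]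
          exact mul_le_mul_of_nonneg_left (ha₀ a (ne_of_mem_erase ha)) (softmax_pos θ a).le
      _ ≤ ∑ a, |pgrad r θ a| := sum_le_sum_of_subset_of_nonneg (subset_univ _)
          fun _ _ _ => abs_nonneg _
      _ ≤ √K * norm2 (pgrad r θ) := sum_abs_le_sqrt_card_mul_norm2 _
  nlinarith [mul_le_mul_of_nonneg_left (sum_softmax_mul_one_sub_le θ a₀) hΔ0]

end Gap

lemma add_mul_integral_id_le_integral {P : Measure ℝ} [IsProbabilityMeasure P] {R c b : ℝ}
    {F : ℝ → ℝ} (hsupp : ∀ᵐ x ∂P, x ∈ Set.Icc (-R) R) (hF : Integrable F P)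
    (hle : ∀ x ∈ Set.Icc (-R) R, c + b * x ≤ F x) :
    c + b * ∫ x, x ∂P ≤ ∫ x, F x ∂P := by
  have hid : Integrable (fun x => x) P :=
    (integrable_const R).mono' measurable_id.aestronglyMeasurable
      (hsupp.mono fun x hx => abs_le.2 hx)
  calc c + b * ∫ x, x ∂P = ∫ x, (c + b * x) ∂P := by
        rw [integral_add (integrable_const c) (hid.const_mul b), integral_const_mul,
          integral_const, probReal_univ, one_smul]
    _ ≤ ∫ x, F x ∂P := integral_mono_ae ((integrable_const c).add (hid.const_mul b)) hF
        (hsupp.mono hle)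

lemma value_sub_expected_sgrad_step_le {K : ℕ} [NeZero K] {R η : ℝ} {r : Fin K → ℝ}
    (hr : ∀ a, |r a| ≤ R) (P : Fin K → Measure ℝ) [∀ a, IsProbabilityMeasure (P a)]
    (hsupp : ∀ a, ∀ᵐ x ∂(P a), x ∈ Set.Icc (-R) R) (hmean : ∀ a, ∫ x, x ∂(P a) = r a)
    (hη : 0 ≤ η) (hηR : η * R ≤ 1 / 20) (θ : Fin K → ℝ) :
    value r θ
        - ∑ a₀, softmax θ a₀ * ∫ x, value r (fun a => θ a + η * sgrad θ a₀ x a) ∂(P a₀)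
      ≤ -η * norm2 (pgrad r θ) ^ 2
        + 5 * η ^ 2 * R ^ 2 * norm2 (pgrad r θ) * ∑ a, softmax θ a * (1 - softmax θ a) := by
  set N := norm2 (pgrad r θ)
  have hstep : ∀ a₀, value r θ - ∫ x, value r (fun a => θ a + η * sgrad θ a₀ x a) ∂(P a₀)
      ≤ -(η * (r a₀ * ∑ a, pgrad r θ a * score θ a₀ a))
        + 5 * η ^ 2 * R ^ 2 * N * (1 - softmax θ a₀) := fun a₀ => by
    have hint : Integrable (fun x => value r (fun a => θ a + η * sgrad θ a₀ x a)) (P a₀) :=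
      (integrable_const R).mono'
        ((continuous_value r).comp (by unfold sgrad; fun_prop)).aestronglyMeasurable
        (.of_forall fun x => abs_value_le hr _)
    have := add_mul_integral_id_le_integral (hsupp a₀) hint
      (c := value r θ - 5 * η ^ 2 * R ^ 2 * N * (1 - softmax θ a₀))
      (b := η * ∑ a, pgrad r θ a * score θ a₀ a) fun x hx =>
      (value_add_sgrad_ge r θ hη hηR (abs_le.2 hx) a₀).trans_eq' (by ring)
    rw [hmean] at this
    linarith
  calc value r θ
        - ∑ a₀, softmax θ a₀ * ∫ x, value r (fun a => θ a + η * sgrad θ a₀ x a) ∂(P a₀)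
      = ∑ a₀, softmax θ a₀ *
          (value r θ - ∫ x, value r (fun a => θ a + η * sgrad θ a₀ x a) ∂(P a₀)) := by
        simp only [mul_sub, sum_sub_distrib, ← sum_mul, sum_softmax, one_mul]
    _ ≤ ∑ a₀, softmax θ a₀ * (-(η * (r a₀ * ∑ a, pgrad r θ a * score θ a₀ a))
        + 5 * η ^ 2 * R ^ 2 * N * (1 - softmax θ a₀)) :=
        sum_le_sum fun a₀ _ => mul_le_mul_of_nonneg_left (hstep a₀) (softmax_pos θ a₀).le
    _ = _ := by
        rw [← sum_softmax_mul_inner_score, mul_sum, mul_sum, ← sum_add_distrib]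
        exact sum_congr rfl fun _ _ => by ring

lemma value_sub_expected_sgrad_step_le_half {K : ℕ} [NeZero K] {R Δ η : ℝ} {r : Fin K → ℝ}
    (hr : ∀ a, |r a| ≤ R) (hΔ0 : 0 < Δ) (hΔ : ∀ i j, i ≠ j → Δ ≤ |r i - r j|)
    (P : Fin K → Measure ℝ) [∀ a, IsProbabilityMeasure (P a)]
    (hsupp : ∀ a, ∀ᵐ x ∂(P a), x ∈ Set.Icc (-R) R) (hmean : ∀ a, ∫ x, x ∂(P a) = r a)
    (hη : 0 ≤ η) (hηR : η * R ≤ 1 / 20) (hηΔ : 40 * η * R ^ 2 * √K ≤ Δ) (θ : Fin K → ℝ) :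
    value r θ
        - ∑ a₀, softmax θ a₀ * ∫ x, value r (fun a => θ a + η * sgrad θ a₀ x a) ∂(P a₀)
      ≤ -(η / 2) * norm2 (pgrad r θ) ^ 2 := by
  set N := norm2 (pgrad r θ)
  set S := ∑ a, softmax θ a * (1 - softmax θ a)
  have hN : 0 ≤ N := norm2_nonneg _
  have hgap : Δ * S ≤ 4 * √K * N := mul_sum_softmax_mul_one_sub_le hΔ0.le hΔ θ
  have herr : 5 * η ^ 2 * R ^ 2 * N * S ≤ η / 2 * N ^ 2 := by
    refine le_of_mul_le_mul_left ?_ hΔ0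
    calc Δ * (5 * η ^ 2 * R ^ 2 * N * S) = 5 * η ^ 2 * R ^ 2 * N * (Δ * S) := by ring
      _ ≤ 5 * η ^ 2 * R ^ 2 * N * (4 * √K * N) :=
        mul_le_mul_of_nonneg_left hgap (mul_nonneg (by positivity) hN)
      _ = η / 2 * N ^ 2 * (40 * η * R ^ 2 * √K) := by ring
      _ ≤ η / 2 * N ^ 2 * Δ := mul_le_mul_of_nonneg_left hηΔ (by positivity)
      _ = Δ * (η / 2 * N ^ 2) := by ring
  linarith [value_sub_expected_sgrad_step_le hr P hsupp hmean hη hηR θ]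

lemma rpow_three_halves_eq_mul_sqrt {x : ℝ} (hx : 0 ≤ x) : x ^ ((3 : ℝ) / 2) = x * √x := by
  rw [sqrt_eq_rpow, ← rpow_one_add' hx (by norm_num)]
  norm_num

theorem constant_learning_rate_progress_general
    (K : ℕ) (hK : 2 ≤ K) (Rmax : ℝ) (hRmax : 0 < Rmax)
    (r : Fin K → ℝ) (hr : ∀ a, r a ∈ Set.Icc (-Rmax) Rmax)
    (Δ : ℝ) (hΔpos : 0 < Δ)
    (hΔle : ∀ i j : Fin K, i ≠ j → Δ ≤ |r i - r j|)
    (P : Fin K → Measure ℝ) (hprob : ∀ a, IsProbabilityMeasure (P a))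
    (hsupp : ∀ a, ∀ᵐ x ∂(P a), x ∈ Set.Icc (-Rmax) Rmax)
    (hmean : ∀ a, ∫ x, x ∂(P a) = r a)
    (η : ℝ) (hη : η = Δ ^ 2 / (40 * (K : ℝ) ^ ((3 : ℝ) / 2) * Rmax ^ 3))
    (θ : Fin K → ℝ) :
    value r θ
        - ∑ a₀ : Fin K, softmax θ a₀ *
            ∫ x, value r (fun a => θ a + η * sgrad θ a₀ x a) ∂(P a₀)
      ≤ -(Δ ^ 2 / (80 * (K : ℝ) ^ ((3 : ℝ) / 2) * Rmax ^ 3)) * (norm2 (pgrad r θ)) ^ 2 := by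
  have : NeZero K := ⟨by omega⟩
  have hrR : ∀ a, |r a| ≤ Rmax := fun a => abs_le.2 (hr a)
  have hΔR : Δ ≤ 2 * Rmax := by
    have h01 := hΔle ⟨0, by omega⟩ ⟨1, by omega⟩ (by simp)
    linarith [abs_sub (r ⟨0, by omega⟩) (r ⟨1, by omega⟩), hrR ⟨0, by omega⟩, hrR ⟨1, by omega⟩]
  have hK2 : (2 : ℝ) ≤ K := by exact_mod_cast hK
  have hη0 : 0 < η := by rw [hη]; positivity
  have hηΔ : 40 * η * Rmax ^ 2 * √K ≤ Δ := by
    have hKR : 0 < K * Rmax := by positivity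
    have h : 40 * η * Rmax ^ 2 * √K * (K * Rmax) = Δ * Δ := by
      rw [hη, rpow_three_halves_eq_mul_sqrt (by positivity)]; field_simp
    exact le_of_mul_le_mul_right (h ▸ mul_le_mul_of_nonneg_left (by nlinarith) hΔpos.le) hKR
  have hηR : η * Rmax ≤ 1 / 20 := by
    refine le_of_mul_le_mul_right ?_ (by positivity : 0 < 40 * Rmax)
    nlinarith [mul_le_mul_of_nonneg_left (one_le_sqrt.2 (by linarith) : 1 ≤ √(K : ℝ))
      (by positivity : 0 ≤ 40 * η * Rmax ^ 2)]
  rw [show Δ ^ 2 / (80 * (K : ℝ) ^ ((3 : ℝ) / 2) * Rmax ^ 3) = η / 2 by rw [hη]; ring]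
  exact value_sub_expected_sgrad_step_le_half hrR hΔpos hΔle P hsupp hmean
    hη0.le hηR hηΔ θ

/-- Constant learning-rate progress: with `η = Δ²/(40 K^{3/2} R_max³)`, the one-step expected
improvement of the stochastic gradient update is at least
`(Δ²/(80 K^{3/2} R_max³))·‖∇(θ)‖₂²`. -/
theorem constant_learning_rate_progress
    (K : ℕ) (hK : 2 ≤ K) (Rmax : ℝ) (hRmax : 0 < Rmax)
    (r : Fin K → ℝ) (hr : ∀ a, r a ∈ Set.Icc (-Rmax) Rmax)
    (hties : ∀ i j : Fin K, i ≠ j → r i ≠ r j)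
    (Δ : ℝ) (hΔpos : 0 < Δ)
    (hΔle : ∀ i j : Fin K, i ≠ j → Δ ≤ |r i - r j|)
    (hΔmem : ∃ i j : Fin K, i ≠ j ∧ Δ = |r i - r j|)
    (P : Fin K → Measure ℝ) (hprob : ∀ a, IsProbabilityMeasure (P a))
    (hsupp : ∀ a, ∀ᵐ x ∂(P a), x ∈ Set.Icc (-Rmax) Rmax)
    (hmean : ∀ a, ∫ x, x ∂(P a) = r a)
    (η : ℝ) (hη : η = Δ ^ 2 / (40 * (K : ℝ) ^ ((3 : ℝ) / 2) * Rmax ^ 3))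
    (θ : Fin K → ℝ) :
    value r θ
        - ∑ a₀ : Fin K, softmax θ a₀ *
            ∫ x, value r (fun a => θ a + η * sgrad θ a₀ x a) ∂(P a₀)
      ≤ -(Δ ^ 2 / (80 * (K : ℝ) ^ ((3 : ℝ) / 2) * Rmax ^ 3)) * (norm2 (pgrad r θ)) ^ 2 :=
  constant_learning_rate_progress_general K hK Rmax hRmax r hr Δ hΔpos hΔle P hprob hsupp hmean η hη
    θ
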